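/- For positive integers m, n, k, d with n ≥ k(m−d) (so the endpoint lies strictly above the barrier when n > k(m−d)) and n + kd > km, the number of monotone lattice paths from (0,0) to (m,n) staying strictly above the line y = k(x−d) equals C(m+n, m) minus the sum over i from ⌊(kd−1)/(k+1)⌋+1 to m of ((n+kd−km)/(m+n+kd−(k+1)i)) · C(m+n+kd−(k+1)i, m−i) · C((k+1)i−kd, i). -/

import Mathlib

open Finset

/-- A monotone lattice path from `s` to `t` using unit steps `(1,0)` and `(0,1)`. -/
def MonoPath (s t : ℤ × ℤ) (P : List (ℤ × ℤ)) : Prop :=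
  P.head? = some s ∧ P.getLast? = some t ∧
  P.Chain' (fun p q => q = (p.1 + 1, p.2) ∨ q = (p.1, p.2 + 1))

/-- Integer binomial coefficient, `0` for negative lower index. -/
def IC (x j : ℤ) : ℕ := if j < 0 then 0 else x.toNat.choose j.toNat

/-- Number of monotone lattice paths from `(a,b)` to `(m,n)` staying weakly above `y = kx - r`. -/
noncomputable def NW (k r a b m n : ℤ) : ℕ :=
  Set.ncard {P : List (ℤ × ℤ) | MonoPath (a, b) (m, n) P ∧ ∀ p ∈ P, k * p.1 - r ≤ p.2}

/-- Number of monotone lattice paths from `(a,b)` to `(m,n)` staying strictly above `y = kx - r`. -/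
noncomputable def NS (k r a b m n : ℤ) : ℕ :=
  Set.ncard {P : List (ℤ × ℤ) | MonoPath (a, b) (m, n) P ∧ ∀ p ∈ P, k * p.1 - r < p.2}

/-!
Both sides satisfy the same recursion at the lattice points strictly above the barrier
`y = k (x - d)`: Pascal's rule, with the term of a point on the barrier dropped, and the value `1`
along the axes. For the path count this is the decomposition by the last step. In the formula,
the `i`-th summand counts the paths whose last point on or below the barrier is `(i, k i - k d)`:
the paths up to that point times a ballot number `(N - k M) / (M + N) * C(M + N, M)` for the rest.
Ballot numbers obey Pascal's rule and vanish on the barrier, and at `(m + 1, n + 1)` the new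
summand `i = m + 1` absorbs the binomial term of a dropped barrier point `(m + 1, n)`.
-/

namespace MonoPath

abbrev IsUnitStep (p q : ℤ × ℤ) : Prop := q = (p.1 + 1, p.2) ∨ q = (p.1, p.2 + 1)

variable {s t u : ℤ × ℤ} {P Q : List (ℤ × ℤ)}

theorem ne_nil (h : MonoPath s t P) : P ≠ [] := by
  rintro rfl; simp [MonoPath] at h

theorem last_mem (h : MonoPath s t P) : t ∈ P :=
  List.mem_of_getLast? h.2.1

theorem concat (h : MonoPath s u Q) (hut : IsUnitStep u t) : MonoPath s t (Q ++ [t]) := by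
  obtain ⟨hs, hu, hQ⟩ := h
  refine ⟨by rwa [List.head?_append_of_ne_nil _ (ne_nil ⟨hs, hu, hQ⟩)], List.getLast?_concat,
    hQ.append (List.isChain_singleton _) ?_⟩
  simp_all

theorem eq_singleton_or_concat (h : MonoPath s t P) :
    (P = [s] ∧ t = s) ∨ ∃ Q u, P = Q ++ [t] ∧ MonoPath s u Q ∧ IsUnitStep u t := by
  obtain ⟨hs, ht, hP⟩ := h
  obtain ⟨Q, rfl⟩ := List.getLast?_eq_some_iff.mp ht
  rcases List.eq_nil_or_concat Q with rfl | ⟨Q, u, rfl⟩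
  · simp_all
  · right
    replace hP : (Q ++ [u] ++ [t]).IsChain IsUnitStep := by
      rw [List.concat_eq_append] at hP; exact hP
    rw [List.isChain_append] at hP
    rw [List.concat_eq_append, List.head?_append_of_ne_nil _ (by simp)] at hs
    exact ⟨Q ++ [u], u, by simp, ⟨hs, List.getLast?_concat, hP.1⟩, by simpa using hP.2.2⟩

theorem length_eq_and_mem_Icc (h : MonoPath s t P) :
    (P.length : ℤ) = t.1 - s.1 + (t.2 - s.2) + 1 ∧ ∀ p ∈ P, s ≤ p ∧ p ≤ t := by
  induction P using List.reverseRecOn generalizing t with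
  | nil => exact absurd rfl h.ne_nil
  | append_singleton Q a ih =>
    rcases h.eq_singleton_or_concat with ⟨hP, rfl⟩ | ⟨Q', u, hP, hQ', hut⟩
    · simp_all
    · obtain ⟨rfl, ht⟩ := List.append_inj' hP rfl
      obtain rfl : t = a := by simpa using ht.symm
      obtain ⟨hlen, hbox⟩ := ih hQ'
      have hu : u ≤ t := by rcases hut with h | h <;> simp [h, Prod.le_def]
      refine ⟨?_, ?_⟩
      · rcases hut with rfl | rfl <;> simp [hlen] <;> ring
      · simp only [List.mem_append, List.mem_singleton]
        rintro p (hp | rfl)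
        · exact ⟨(hbox p hp).1, (hbox p hp).2.trans hu⟩
        · exact ⟨(hbox u hQ'.last_mem).1.trans hu, le_rfl⟩

theorem le (h : MonoPath s t P) : s ≤ t := (h.length_eq_and_mem_Icc.2 t h.last_mem).1

theorem setOf_finite (s t : ℤ × ℤ) : {P | MonoPath s t P}.Finite := by
  refine ((List.finite_length_eq (Set.Icc s t) (t.1 - s.1 + (t.2 - s.2) + 1).toNat).image
    (List.map Subtype.val)).subset ?_
  intro P hP
  obtain ⟨hlen, hbox⟩ := length_eq_and_mem_Icc hP
  lift P to List (Set.Icc s t) using hbox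
  exact ⟨P, by simp [← hlen], rfl⟩

end MonoPath

def pathsAbove (k r a b m n : ℤ) : Set (List (ℤ × ℤ)) :=
  {P | MonoPath (a, b) (m, n) P ∧ ∀ p ∈ P, k * p.1 - r < p.2}

section PathsAbove

variable {k r a b m n : ℤ}

theorem NS_eq_ncard_pathsAbove : NS k r a b m n = (pathsAbove k r a b m n).ncard := rfl

theorem pathsAbove_finite : (pathsAbove k r a b m n).Finite :=
  (MonoPath.setOf_finite _ _).subset fun _ hP ↦ hP.1

theorem NS_eq_zero_of_le (h : n ≤ k * m - r) : NS k r a b m n = 0 := by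
  rw [NS_eq_ncard_pathsAbove, Set.ncard_eq_zero pathsAbove_finite, Set.eq_empty_iff_forall_notMem]
  rintro P ⟨hP, habove⟩
  have := habove _ hP.last_mem
  dsimp only at this
  omega

theorem NS_eq_zero_of_lt (h : m < a ∨ n < b) : NS k r a b m n = 0 := by
  rw [NS_eq_ncard_pathsAbove, Set.ncard_eq_zero pathsAbove_finite, Set.eq_empty_iff_forall_notMem]
  rintro P ⟨hP, -⟩
  have := Prod.le_def.mp hP.le
  omega

theorem NS_self (h : k * a - r < b) : NS k r a b a b = 1 := by
  rw [NS_eq_ncard_pathsAbove, Set.ncard_eq_one]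
  refine ⟨[(a, b)], Set.eq_singleton_iff_unique_mem.mpr
    ⟨⟨⟨rfl, rfl, List.isChain_singleton _⟩, by simpa⟩, ?_⟩⟩
  rintro P ⟨hP, -⟩
  rcases hP.eq_singleton_or_concat with ⟨hP, -⟩ | ⟨Q, u, -, hQ, hu⟩
  · exact hP
  · have := Prod.le_def.mp hQ.le
    rcases hu with hu | hu <;> simp [Prod.ext_iff] at hu <;> omega

theorem pathsAbove_eq_union (hne : (m, n) ≠ (a, b)) (habove : k * m - r < n) :
    pathsAbove k r a b m n =
      (· ++ [(m, n)]) '' pathsAbove k r a b (m - 1) n ∪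
        (· ++ [(m, n)]) '' pathsAbove k r a b m (n - 1) := by
  ext P
  constructor
  · rintro ⟨hP, hPabove⟩
    rcases hP.eq_singleton_or_concat with ⟨-, h⟩ | ⟨Q, u, rfl, hQ, hu⟩
    · exact absurd h hne
    have hQabove : ∀ p ∈ Q, k * p.1 - r < p.2 := fun p hp ↦ hPabove p (by simp [hp])
    rcases hu with hu | hu
    · obtain rfl : u = (m - 1, n) := by simp_all [Prod.ext_iff]
      exact Or.inl ⟨Q, ⟨hQ, hQabove⟩, rfl⟩
    · obtain rfl : u = (m, n - 1) := by simp_all [Prod.ext_iff]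
      exact Or.inr ⟨Q, ⟨hQ, hQabove⟩, rfl⟩
  · rintro (⟨Q, ⟨hQ, hQabove⟩, rfl⟩ | ⟨Q, ⟨hQ, hQabove⟩, rfl⟩)
    · refine ⟨hQ.concat (Or.inl (by simp)), ?_⟩
      simpa only [List.forall_mem_append, List.forall_mem_singleton] using ⟨hQabove, habove⟩
    · refine ⟨hQ.concat (Or.inr (by simp)), ?_⟩
      simpa only [List.forall_mem_append, List.forall_mem_singleton] using ⟨hQabove, habove⟩

theorem NS_eq_add (hne : (m, n) ≠ (a, b)) (habove : k * m - r < n) :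
    NS k r a b m n = NS k r a b (m - 1) n + NS k r a b m (n - 1) := by
  have hdisj : Disjoint ((· ++ [(m, n)]) '' pathsAbove k r a b (m - 1) n)
      ((· ++ [(m, n)]) '' pathsAbove k r a b m (n - 1)) := by
    rw [Set.disjoint_left]
    rintro _ ⟨Q, hQ, rfl⟩ ⟨Q', hQ', hQQ'⟩
    obtain rfl := List.append_cancel_right hQQ'
    have := hQ.1.2.1.symm.trans hQ'.1.2.1
    simp [Prod.ext_iff] at this
  simp only [NS_eq_ncard_pathsAbove, pathsAbove_eq_union hne habove]
  rw [Set.ncard_union_eq hdisj (pathsAbove_finite.image _) (pathsAbove_finite.image _),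
    Set.ncard_image_of_injective _ (List.append_left_injective _),
    Set.ncard_image_of_injective _ (List.append_left_injective _)]

end PathsAbove

theorem choose_add_one_add_one (m n : ℕ) :
    (m + 1 + (n + 1)).choose (m + 1) = (m + (n + 1)).choose m + (m + 1 + n).choose (m + 1) := by
  rw [show m + 1 + (n + 1) = m + n + 1 + 1 by ring, Nat.choose_succ_succ',
    show m + (n + 1) = m + n + 1 by ring, show m + 1 + n = m + n + 1 by ring]

theorem IC_natCast (x j : ℕ) : IC x j = x.choose j := by
  simp [IC]

theorem IC_eq_zero_of_lt {x : ℤ} {j : ℕ} (hj : 1 ≤ j) (h : x < j) : IC x j = 0 := by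
  rw [IC, if_neg (by omega), Int.toNat_natCast]
  exact Nat.choose_eq_zero_of_lt (by omega)

def ballot (k M N : ℤ) : ℚ :=
  ((N - k * M : ℤ) : ℚ) / ((M + N : ℤ) : ℚ) * (IC (M + N) M : ℚ)

section Ballot

variable {k M N : ℤ}

theorem ballot_zero_left (hN : 0 < N) : ballot k 0 N = 1 := by
  have : (N : ℚ) ≠ 0 := by exact_mod_cast hN.ne'
  simp [ballot, IC, this]

theorem ballot_mul_self : ballot k M (k * M) = 0 := by
  simp [ballot]

theorem ballot_natCast (a b : ℕ) :
    ballot k a b = ((b - k * a : ℤ) : ℚ) / (a + b : ℚ) * ((a + b).choose a : ℚ) := by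
  rw [ballot, ← Nat.cast_add, IC_natCast]
  push_cast
  ring

theorem ballot_add_one (hM : 0 ≤ M) (hN : 0 ≤ N) :
    ballot k (M + 1) (N + 1) = ballot k M (N + 1) + ballot k (M + 1) N := by
  lift M to ℕ using hM
  lift N to ℕ using hN
  have h₁ := Nat.add_one_mul_choose_eq (M + N + 1) M
  have h₂ := Nat.choose_mul_succ_eq (M + N + 1) (M + 1)
  rw [show M + N + 1 + 1 - (M + 1) = N + 1 by omega] at h₂
  have e₀ := ballot_natCast (k := k) (M + 1) (N + 1)
  have e₁ := ballot_natCast (k := k) M (N + 1)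
  have e₂ := ballot_natCast (k := k) (M + 1) N
  push_cast at e₀ e₁ e₂
  rw [e₀, e₁, e₂, show M + (N + 1) = M + N + 1 by ring, show M + 1 + N = M + N + 1 by ring,
    show M + 1 + (N + 1) = M + N + 1 + 1 by ring]
  have h₁' : ((M + N + 1).choose M : ℚ) =
      (M + 1) * (M + N + 1 + 1).choose (M + 1) / (M + N + 2) := by
    rw [eq_div_iff (by positivity)]; exact_mod_cast (by linarith [h₁])
  have h₂' : ((M + N + 1).choose (M + 1) : ℚ) =
      (N + 1) * (M + N + 1 + 1).choose (M + 1) / (M + N + 2) := by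
    rw [eq_div_iff (by positivity)]; exact_mod_cast (by linarith [h₂])
  rw [h₁', h₂']
  field_simp
  ring

end Ballot

def firstIndex (k d : ℤ) : ℕ := ((k * d - 1) / (k + 1) + 1).toNat

def lastTouchCount (k d : ℤ) (m n i : ℕ) : ℚ :=
  ballot k (m - i) (n - k * i + k * d) * (IC ((k + 1) * i - k * d) i : ℚ)

def barrierFormula (k d : ℤ) (m n : ℕ) : ℚ :=
  ((m + n).choose m : ℚ) - ∑ i ∈ Finset.Icc (firstIndex k d) m, lastTouchCount k d m n i

section BarrierFormula

variable {k d : ℤ} {m n : ℕ}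

theorem firstIndex_le_iff (hk : 0 ≤ k) {i : ℕ} :
    firstIndex k d ≤ i ↔ k * d ≤ (k + 1) * i := by
  rw [firstIndex, Int.toNat_le, Int.add_one_le_iff, Int.ediv_lt_iff_lt_mul (by omega)]
  constructor <;> intro h <;> linarith

theorem one_le_firstIndex (hk : 0 ≤ k) (hkd : 0 < k * d) : 1 ≤ firstIndex k d := by
  by_contra! h
  have := (firstIndex_le_iff hk).mp (Nat.lt_one_iff.mp h).le
  simp at this
  omega

theorem lastTouchCount_self (h : k * m - k * d < n) :
    lastTouchCount k d m n m = IC ((k + 1) * m - k * d) m := by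
  rw [lastTouchCount, sub_self, ballot_zero_left (by linarith), one_mul]

theorem lastTouchCount_of_eq (h : (n : ℤ) = k * m - k * d) (i : ℕ) :
    lastTouchCount k d m n i = 0 := by
  rw [lastTouchCount, show (n : ℤ) - k * i + k * d = k * (m - i) by rw [h]; ring, ballot_mul_self,
    zero_mul]

theorem lastTouchCount_add_one (hk : 0 ≤ k) {i : ℕ} (hi : i ≤ m)
    (h : k * (m + 1) - k * d ≤ n) :
    lastTouchCount k d (m + 1) (n + 1) i =
      lastTouchCount k d m (n + 1) i + lastTouchCount k d (m + 1) n i := by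
  have hN : 0 ≤ (n : ℤ) - k * i + k * d := by
    nlinarith [mul_le_mul_of_nonneg_left (show (i : ℤ) ≤ m + 1 by omega) hk]
  simp only [lastTouchCount]
  rw [show ((m + 1 : ℕ) : ℤ) - i = (m - i : ℤ) + 1 by push_cast; ring,
    show ((n + 1 : ℕ) : ℤ) - k * i + k * d = (n - k * i + k * d) + 1 by push_cast; ring,
    ballot_add_one (by omega) hN, add_mul]

theorem barrierFormula_zero_left (hk : 0 ≤ k) (hkd : 0 < k * d) (n : ℕ) :
    barrierFormula k d 0 n = 1 := by
  rw [barrierFormula, Finset.Icc_eq_empty (by have := one_le_firstIndex hk hkd; omega)]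
  simp

theorem barrierFormula_zero_right (hk : 0 ≤ k) (h : k * m < k * d) :
    barrierFormula k d m 0 = 1 := by
  rw [barrierFormula, Finset.sum_eq_zero, add_zero, Nat.choose_self]
  · simp
  intro i hi
  obtain ⟨hi₁, hi₂⟩ := Finset.mem_Icc.mp hi
  have hki : k * i ≤ k * m := mul_le_mul_of_nonneg_left (by exact_mod_cast hi₂) hk
  have hkd : 0 < k * d := by nlinarith [mul_nonneg hk (Nat.cast_nonneg (α := ℤ) m)]
  rw [lastTouchCount, IC_eq_zero_of_lt ((one_le_firstIndex hk hkd).trans hi₁) (by linarith)]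
  simp

theorem barrierFormula_add_one (hk : 0 ≤ k) (h : k * (m + 1) - k * d < n) :
    barrierFormula k d (m + 1) (n + 1) =
      barrierFormula k d m (n + 1) + barrierFormula k d (m + 1) n := by
  simp only [barrierFormula, choose_add_one_add_one, Nat.cast_add]
  rcases le_or_gt (firstIndex k d) (m + 1) with hlo | hlo
  · rw [Finset.sum_Icc_succ_top hlo, Finset.sum_Icc_succ_top hlo,
      Finset.sum_congr rfl fun i hi ↦ lastTouchCount_add_one hk (Finset.mem_Icc.mp hi).2 h.le,
      Finset.sum_add_distrib, lastTouchCount_self (by push_cast; linarith),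
      lastTouchCount_self (by push_cast; linarith)]
    ring
  · rw [Finset.Icc_eq_empty hlo.not_ge, Finset.Icc_eq_empty (by omega)]
    simp only [Finset.sum_empty]
    ring

theorem barrierFormula_add_one_of_eq (hk : 0 ≤ k) (h : (n : ℤ) = k * (m + 1) - k * d) :
    barrierFormula k d (m + 1) (n + 1) = barrierFormula k d m (n + 1) := by
  have hlo : firstIndex k d ≤ m + 1 := by
    rw [firstIndex_le_iff hk]; push_cast; nlinarith
  simp only [barrierFormula, choose_add_one_add_one, Nat.cast_add]
  have hzero : ∑ i ∈ Finset.Icc (firstIndex k d) m, lastTouchCount k d (m + 1) n i = 0 :=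
    Finset.sum_eq_zero fun i _ ↦ lastTouchCount_of_eq (by push_cast; linarith) i
  rw [Finset.sum_Icc_succ_top hlo,
      Finset.sum_congr rfl fun i hi ↦ lastTouchCount_add_one hk (Finset.mem_Icc.mp hi).2 h.ge,
      Finset.sum_add_distrib, hzero, lastTouchCount_self (by push_cast; linarith)]
  rw [show (k + 1) * ((m + 1 : ℕ) : ℤ) - k * d = ((m + 1 + n : ℕ) : ℤ) by
    push_cast; linarith, IC_natCast]
  ring

end BarrierFormula

theorem NS_eq_barrierFormula {k d : ℤ} (hk : 0 ≤ k) (hkd : 0 < k * d) (m n : ℕ)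
    (h : k * m - k * d < n) : (NS k (k * d) 0 0 m n : ℚ) = barrierFormula k d m n := by
  induction m generalizing n with
  | zero =>
    rw [barrierFormula_zero_left hk hkd]
    induction n with
    | zero => simp [NS_self (show k * 0 - k * d < 0 by omega)]
    | succ n ih =>
      rw [NS_eq_add (by simp; omega) (by push_cast; omega), NS_eq_zero_of_lt (by omega)]
      simpa using ih (by push_cast; omega)
  | succ m ihm =>
    induction n with
    | zero =>
      push_cast at h ⊢
      rw [NS_eq_add (by simp; omega) (by simpa using h), add_sub_cancel_right, zero_sub,
        NS_eq_zero_of_lt (n := -1) (by omega), add_zero,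
        barrierFormula_zero_right hk (by push_cast; linarith)]
      simpa [barrierFormula_zero_right hk (show k * m < k * d by linarith)] using
        ihm 0 (by push_cast; nlinarith)
    | succ n ihn =>
      push_cast at h ihn ⊢
      have hleft : (NS k (k * d) 0 0 m (n + 1) : ℚ) = barrierFormula k d m (n + 1) := by
        exact_mod_cast ihm (n + 1) (by push_cast; nlinarith)
      rw [NS_eq_add (by simp; omega) h, add_sub_cancel_right, add_sub_cancel_right, Nat.cast_add,
        hleft]
      by_cases hbelow : k * (m + 1) - k * d < n
      · rw [ihn hbelow, barrierFormula_add_one hk hbelow]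
      · rw [NS_eq_zero_of_le (by linarith), Nat.cast_zero, add_zero,
          barrierFormula_add_one_of_eq hk (by linarith)]

theorem stmt18_general (m n k d : ℤ) (hm : 1 ≤ m) (hn : 1 ≤ n) (hk : 1 ≤ k) (hd : 1 ≤ d)
    (h2 : k * m < n + k * d) :
    (NS k (k * d) 0 0 m n : ℚ) =
      (IC (m + n) m : ℚ) -
        ∑ i ∈ Finset.Icc ((((k * d - 1) / (k + 1)) + 1).toNat) m.toNat,
          (((n + k * d - k * m : ℤ) : ℚ) / ((m + n + k * d - (k + 1) * (i : ℤ) : ℤ) : ℚ)) *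
            (IC (m + n + k * d - (k + 1) * (i : ℤ)) (m - (i : ℤ)) : ℚ) *
            (IC ((k + 1) * (i : ℤ) - k * d) (i : ℤ) : ℚ) := by
  lift m to ℕ using by omega
  lift n to ℕ using by omega
  rw [NS_eq_barrierFormula (by omega) (by positivity) m n (by linarith), barrierFormula,
    Int.toNat_natCast]
  congr 1
  refine Finset.sum_congr rfl fun i _ ↦ ?_
  rw [lastTouchCount, ballot,
    show (n : ℤ) - k * i + k * d - k * (m - i) = n + k * d - k * m by ring,
    show (m : ℤ) - i + (n - k * i + k * d) = m + n + k * d - (k + 1) * i by ring]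

theorem stmt18 (m n k d : ℤ) (hm : 1 ≤ m) (hn : 1 ≤ n) (hk : 1 ≤ k) (hd : 1 ≤ d)
    (h1 : k * (m - d) ≤ n) (h2 : k * m < n + k * d) :
    (NS k (k * d) 0 0 m n : ℚ) =
      (IC (m + n) m : ℚ) -
        ∑ i ∈ Finset.Icc ((((k * d - 1) / (k + 1)) + 1).toNat) m.toNat,
          (((n + k * d - k * m : ℤ) : ℚ) / ((m + n + k * d - (k + 1) * (i : ℤ) : ℤ) : ℚ)) *
            (IC (m + n + k * d - (k + 1) * (i : ℤ)) (m - (i : ℤ)) : ℚ) *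
            (IC ((k + 1) * (i : ℤ) - k * d) (i : ℤ) : ℚ) :=
  stmt18_general m n k d hm hn hk hd h2
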